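/- arXiv:1108.3622 — 10 statements merged into one kernel-verified Lean document; each statement's English description precedes it below -/
import Mathlib

section
/- The Thue–Morse word (the fixed point starting with a of the morphism a ↦ ab, b ↦ ba over alphabet {a,b}) contains no factor of the form u u u with u a nonempty word (i.e., it avoids the pattern ααα). -/
/-- `v` is a factor of the infinite word `w`. -/
def FactorOf {α : Type*} (v : List α) (w : ℕ → α) : Prop :=
  ∃ i : ℕ, v = (List.range v.length).map fun j => w (i + j)

/-!
Write the cube as a window `[i, i + 3n)` of `t` with period `n`. If `n = 2m` is even, the even
positions of the window, read through `t (2k) = t k`, give a window of `t` with period `m`, so the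
period can be halved. If `n` is odd and `n ≥ 3`, comparing `t p` with `t (p + n)` for odd `p` shows
that `t` alternates on the window; but two alternating steps starting at an even position `2k`
force `t k = t (k + 1) = t (k + 2)`, and `t` has no three equal consecutive letters, since
`t (2k + 1) = !t (2k)`. The period `n = 1` contradicts this directly.
-/

theorem FactorOf.getElem {α : Type*} {v : List α} {w : ℕ → α} {i : ℕ}
    (hv : v = (List.range v.length).map fun j => w (i + j)) (j : ℕ) (hj : j < v.length) :
    v[j] = w (i + j) := by
  rw [List.getElem_of_eq hv hj, List.getElem_map, List.getElem_range]

theorem List.getElem_append_append_self_add_length {α : Type*} (u : List α) (j : ℕ)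
    (hj : j < 2 * u.length) :
    (u ++ u ++ u)[j + u.length]'(by simp only [List.length_append]; omega) =
      (u ++ u ++ u)[j]'(by simp only [List.length_append]; omega) := by
  rw [List.getElem_append_left (i := j) (as := u ++ u) (by simp only [List.length_append]; omega),
    List.getElem_of_eq (List.append_assoc u u u), List.getElem_append_right (by omega)]
  simp only [Nat.add_sub_cancel]

/-- `w` has period `n` on the window `[i, i + 3n)`. -/
def IsCubeAt {α : Type*} (w : ℕ → α) (n i : ℕ) : Prop :=
  ∀ p, i ≤ p → p < i + 2 * n → w p = w (p + n)

theorem isCubeAt_of_factorOf {α : Type*} {w : ℕ → α} {u : List α}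
    (h : FactorOf (u ++ u ++ u) w) : ∃ i, IsCubeAt w u.length i := by
  obtain ⟨i, hv⟩ := h
  refine ⟨i, fun p hip hp => ?_⟩
  have hlen : (u ++ u ++ u).length = 3 * u.length := by simp only [List.length_append]; omega
  calc w p = w (i + (p - i)) := by congr 1; omega
    _ = (u ++ u ++ u)[p - i] := (FactorOf.getElem hv _ (by omega)).symm
    _ = (u ++ u ++ u)[p - i + u.length] :=
      (List.getElem_append_append_self_add_length u _ (by omega)).symm
    _ = w (i + (p - i + u.length)) := FactorOf.getElem hv _ _
    _ = w (p + u.length) := by congr 1; omega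

section ThueMorse

variable {t : ℕ → Bool} (hfix : ∀ n, t (2 * n) = t n ∧ t (2 * n + 1) = !t n)
include hfix

theorem not_three_consecutive_eq (k : ℕ) : ¬ (t k = t (k + 1) ∧ t (k + 1) = t (k + 2)) := by
  rintro ⟨h₁, h₂⟩
  obtain ⟨m, rfl | rfl⟩ := Nat.even_or_odd' k
  · rw [(hfix m).1, (hfix m).2] at h₁
    simp at h₁
  · rw [show 2 * m + 1 + 1 = 2 * (m + 1) by ring, show 2 * m + 1 + 2 = 2 * (m + 1) + 1 by ring,
      (hfix (m + 1)).1, (hfix (m + 1)).2] at h₂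
    simp at h₂

theorem not_isCubeAt_one (i : ℕ) : ¬ IsCubeAt t 1 i := fun h =>
  not_three_consecutive_eq hfix i ⟨h i le_rfl (by omega), h (i + 1) (by omega) (by omega)⟩

theorem isCubeAt_half {m i : ℕ} (h : IsCubeAt t (2 * m) i) : IsCubeAt t m ((i + 1) / 2) := by
  intro q hq₁ hq₂
  rw [← (hfix q).1, ← (hfix (q + m)).1, mul_add]
  exact h (2 * q) (by omega) (by omega)

theorem succ_eq_not_of_isCubeAt_odd {m i : ℕ} (h : IsCubeAt t (2 * m + 1) i) (p : ℕ) (hip : i ≤ p)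
    (hp : p + 1 < i + 2 * (2 * m + 1)) : t (p + 1) = !t p := by
  obtain ⟨k, rfl | rfl⟩ := Nat.even_or_odd' p
  · exact (hfix k).2.trans (by rw [(hfix k).1])
  · -- `p + n` is even, so `t p` and `t (p + 1)` are read off the same letter `t (k + m + 1)`.
    have h₁ := h (2 * k + 1) hip (by omega)
    have h₂ := h (2 * k + 1 + 1) (by omega) hp
    rw [show 2 * k + 1 + (2 * m + 1) = 2 * (k + m + 1) by ring, (hfix _).1] at h₁
    rw [show 2 * k + 1 + 1 + (2 * m + 1) = 2 * (k + m + 1) + 1 by ring, (hfix _).2] at h₂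
    rw [h₁, h₂]

theorem not_alternating_four_from_even (k : ℕ) :
    ¬ ∀ j < 4, t (2 * k + j + 1) = !t (2 * k + j) := by
  intro halt
  have step (j : ℕ) (hj : j < 3) : t (2 * k + j + 2) = t (2 * k + j) := by
    have h₁ := halt (j + 1) (by omega)
    rw [show 2 * k + (j + 1) + 1 = 2 * k + j + 2 by ring,
      show 2 * k + (j + 1) = 2 * k + j + 1 by ring, halt j (by omega), Bool.not_not] at h₁
    exact h₁
  refine not_three_consecutive_eq hfix k ⟨?_, ?_⟩
  · rw [← (hfix k).1, ← (hfix (k + 1)).1, show 2 * (k + 1) = 2 * k + 0 + 2 by ring]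
    exact (step 0 (by omega)).symm
  · rw [← (hfix (k + 1)).1, ← (hfix (k + 2)).1, show 2 * (k + 1) = 2 * k + 2 by ring,
      show 2 * (k + 2) = 2 * k + 2 + 2 by ring]
    exact (step 2 (by omega)).symm

theorem not_isCubeAt_odd {m i : ℕ} (hm : 1 ≤ m) : ¬ IsCubeAt t (2 * m + 1) i := by
  intro h
  obtain ⟨k, hk⟩ : ∃ k, i ≤ 2 * k ∧ 2 * k ≤ i + 1 := ⟨(i + 1) / 2, by omega, by omega⟩
  exact not_alternating_four_from_even hfix k fun j hj =>
    succ_eq_not_of_isCubeAt_odd hfix h _ (by omega) (by omega)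

theorem not_isCubeAt {n : ℕ} (hn : 1 ≤ n) (i : ℕ) : ¬ IsCubeAt t n i := by
  induction n using Nat.strong_induction_on generalizing i with
  | _ n ih =>
    obtain ⟨m, rfl | rfl⟩ := Nat.even_or_odd' n
    · exact fun h => ih m (by omega) (by omega) _ (isCubeAt_half hfix h)
    · rcases Nat.eq_zero_or_pos m with rfl | hm
      · exact not_isCubeAt_one hfix i
      · exact not_isCubeAt_odd hfix hm

end ThueMorse

theorem thue_morse_avoids_cube_general (t : ℕ → Bool)
    (hfix : ∀ n : ℕ, t (2 * n) = t n ∧ t (2 * n + 1) = !(t n)) :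
    ∀ u : List Bool, u ≠ [] → ¬ FactorOf (u ++ u ++ u) t := by
  intro u hu hfactor
  obtain ⟨i, hcube⟩ := isCubeAt_of_factorOf hfactor
  exact not_isCubeAt hfix (List.length_pos_iff.mpr hu) i hcube

/-- The Thue–Morse word `t` (fixed point, starting with `a = false`, of the
morphism `a ↦ ab`, `b ↦ ba`, i.e. `t (2n) = t n` and `t (2n+1) = ¬ t n`)
avoids the pattern ααα: it contains no factor `u ++ u ++ u` with `u` nonempty. -/
theorem thue_morse_avoids_cube (t : ℕ → Bool)
    (h0 : t 0 = false)
    (hfix : ∀ n : ℕ, t (2 * n) = t n ∧ t (2 * n + 1) = !(t n)) :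
    ∀ u : List Bool, u ≠ [] → ¬ FactorOf (u ++ u ++ u) t :=
  thue_morse_avoids_cube_general t hfix
end

section
/- The Thue–Morse word contains no factor of the form u v u v u with u, v nonempty words (i.e., it avoids the pattern αβαβα). -/
def HasOverlapAt {α : Type*} (w : ℕ → α) (k p : ℕ) : Prop :=
  ∀ j ≤ p, w (k + j) = w (k + p + j)

section Factor

variable {α : Type*} {w : ℕ → α}

theorem FactorOf.getElem? {v : List α} (h : FactorOf v w) :
    ∃ i, ∀ j < v.length, v[j]? = some (w (i + j)) := by
  obtain ⟨i, hi⟩ := h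
  exact ⟨i, fun j hj => by rw [hi]; simp [hj]⟩

theorem FactorOf.exists_hasOverlapAt {u v : List α} (hu : u ≠ [])
    (h : FactorOf (u ++ v ++ u ++ v ++ u) w) : ∃ i, HasOverlapAt w i (u.length + v.length) := by
  obtain ⟨i, hi⟩ := h.getElem?
  refine ⟨i, fun j hj => Option.some.inj ?_⟩
  have hu₀ : 0 < u.length := List.length_pos_iff.mpr hu
  have hlen : (u ++ v ++ u ++ v ++ u).length = 3 * u.length + 2 * v.length := by
    simp only [List.length_append]; ring
  calc some (w (i + j)) = (u ++ v ++ u ++ v ++ u)[j]? := (hi j (by omega)).symm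
    _ = ((u ++ v ++ u) ++ (v ++ u))[j]? := by simp only [List.append_assoc]
    _ = (u ++ v ++ u)[j]? := List.getElem?_append_left (by simp; omega)
    _ = ((u ++ v) ++ (u ++ v ++ u))[u.length + v.length + j]? := by
      rw [List.getElem?_append_right (l₁ := u ++ v) (l₂ := u ++ v ++ u) (by simp)]; simp
    _ = (u ++ v ++ u ++ v ++ u)[u.length + v.length + j]? := by simp only [List.append_assoc]
    _ = some (w (i + (u.length + v.length) + j)) := by
      rw [hi _ (by omega)]; simp only [Nat.add_assoc]

end Factor

theorem Bool.eq_not_of_alternating {f : ℕ → Bool} {n : ℕ} (hf : ∀ j < n, f (j + 1) = !f j)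
    (hn : Odd n) : f n = !f 0 := by
  suffices ∀ j ≤ n, f j = (f 0 ^^ decide (Odd j)) by simpa [hn] using this n le_rfl
  intro j hj
  induction j with
  | zero => simp
  | succ j ih =>
    rw [hf j (by omega), ih (by omega)]
    simp only [Nat.odd_add_one]
    cases f 0 <;> by_cases Odd j <;> simp [*]

section ThueMorse

variable {t : ℕ → Bool}

/-- Inside the overlap every letter differs from the next one: at an even position because of
`hpair`, at an odd position because the same pair recurs `p` positions later at an even one.
An odd number of alternations then gives `t (k + p) ≠ t k`. -/
theorem not_hasOverlapAt_of_odd (hpair : ∀ n, t (2 * n + 1) = !t (2 * n)) {k p : ℕ}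
    (hp : Odd p) : ¬ HasOverlapAt t k p := by
  intro hov
  have hstep : ∀ i, Even i → t (i + 1) = !t i := by
    rintro _ ⟨x, rfl⟩; rw [← two_mul]; exact hpair x
  have halternate : ∀ j < p, t (k + j + 1) = !t (k + j) := by
    intro j hj
    rcases Nat.even_or_odd (k + j) with he | ho
    · exact hstep _ he
    · have hnext := hov (j + 1) hj
      rw [← Nat.add_assoc, ← Nat.add_assoc] at hnext
      rw [hov j hj.le, hnext]
      exact hstep _ (by grind)
  have hend := Bool.eq_not_of_alternating (f := fun j => t (k + j)) halternate hp
  have hstart := hov 0 (Nat.zero_le _)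
  simp only [Nat.add_zero] at hend hstart
  rw [hstart] at hend
  exact (Bool.eq_not_self _).1 hend

theorem eq_iff_eq_div_two (hfix : ∀ n, t (2 * n) = t n ∧ t (2 * n + 1) = !t n) {a b : ℕ}
    (hab : a % 2 = b % 2) : t a = t b ↔ t (a / 2) = t (b / 2) := by
  rw [← Nat.div_add_mod a 2, ← Nat.div_add_mod b 2, hab]
  rcases Nat.mod_two_eq_zero_or_one b with h | h <;> simp [h, hfix, Nat.mul_add_div]

theorem HasOverlapAt.half (hfix : ∀ n, t (2 * n) = t n ∧ t (2 * n + 1) = !t n) {k m : ℕ}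
    (hov : HasOverlapAt t k (2 * m)) : HasOverlapAt t (k / 2) m := by
  intro j hj
  have := (eq_iff_eq_div_two hfix (a := k + 2 * j) (b := k + 2 * m + 2 * j) (by omega)).1
    (hov (2 * j) (by omega))
  rwa [show (k + 2 * j) / 2 = k / 2 + j by omega,
    show (k + 2 * m + 2 * j) / 2 = k / 2 + m + j by omega] at this

theorem not_hasOverlapAt (hfix : ∀ n, t (2 * n) = t n ∧ t (2 * n + 1) = !t n) {p : ℕ}
    (hp : 0 < p) (k : ℕ) : ¬ HasOverlapAt t k p := by
  induction p using Nat.strong_induction_on generalizing k with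
  | _ p ih =>
    rcases Nat.even_or_odd' p with ⟨m, rfl | rfl⟩
    · exact fun hov => ih m (by omega) (by omega) _ (hov.half hfix)
    · exact not_hasOverlapAt_of_odd (fun n => by simp [hfix]) (odd_two_mul_add_one m)

end ThueMorse

theorem thue_morse_avoids_ababa_general (t : ℕ → Bool)
    (hfix : ∀ n : ℕ, t (2 * n) = t n ∧ t (2 * n + 1) = !(t n)) :
    ∀ u v : List Bool, u ≠ [] → v ≠ [] →
      ¬ FactorOf (u ++ v ++ u ++ v ++ u) t := by
  intro u v hu _ h
  obtain ⟨i, hov⟩ := h.exists_hasOverlapAt hu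
  have hp : 0 < u.length + v.length := by have := List.length_pos_iff.mpr hu; omega
  exact not_hasOverlapAt hfix hp i hov

/-- The Thue–Morse word `t` (fixed point, starting with `a = false`, of the
morphism `a ↦ ab`, `b ↦ ba`) avoids the pattern αβαβα: it contains no factor
`u ++ v ++ u ++ v ++ u` with `u, v` nonempty. -/
theorem thue_morse_avoids_ababa (t : ℕ → Bool)
    (h0 : t 0 = false)
    (hfix : ∀ n : ℕ, t (2 * n) = t n ∧ t (2 * n + 1) = !(t n)) :
    ∀ u v : List Bool, u ≠ [] → v ≠ [] →
      ¬ FactorOf (u ++ v ++ u ++ v ++ u) t :=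
  thue_morse_avoids_ababa_general t hfix
end

section
/- There is no infinite binary word that avoids the pattern α θ(α) α for all morphic involutions θ on {a,b}*. That is, every infinite word w over {a,b} has a factor of the form u θ(u) u for some nonempty word u and some morphic involution θ (θ being either the identity or the swap a ↔ b extended morphically). -/
lemma fin_two_add_add_cancel : ∀ z c : Fin 2, z + c + c = z := by decide

lemma fin_two_eq_add_one_of_ne : ∀ a b : Fin 2, a ≠ b → a = b + 1 := by decide

lemma factorOf_of_period_two_letter {w : ℕ → Fin 2} {i : ℕ} (hi : w (i + 2) = w i) :
    FactorOf ([w i] ++ [w i].map (· + (w (i + 1) - w i)) ++ [w i]) w :=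
  ⟨i, by simp [List.range_succ, hi]⟩

lemma factorOf_of_antiperiodic {w : ℕ → Fin 2} (h : ∀ i, w (i + 2) ≠ w i) :
    FactorOf ([w 0, w 1] ++ [w 0, w 1].map (· + 1) ++ [w 0, w 1]) w := by
  have hcompl (i : ℕ) : w (i + 2) = w i + 1 := fin_two_eq_add_one_of_ne _ _ (h i)
  have hperiod (i : ℕ) : w (i + 4) = w i := by
    rw [hcompl (i + 2), hcompl i, fin_two_add_add_cancel]
  refine ⟨0, ?_⟩
  simp [List.range_succ, hcompl 0, hcompl 1, hperiod 0, hperiod 1]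

/-- No infinite binary word avoids `α θ(α) α` for all morphic involutions:
every `w : ℕ → Fin 2` has a factor `u ++ θ(u) ++ u` for some nonempty `u`
and some morphic involution `θ` (induced by a letter involution `g`). -/
theorem binary_contains_a_ta_a_morphic (w : ℕ → Fin 2) :
    ∃ u : List (Fin 2), u ≠ [] ∧ ∃ g : Fin 2 → Fin 2, (∀ z, g (g z) = z) ∧
      FactorOf (u ++ u.map g ++ u) w := by
  -- `θ` is a translation `z ↦ z + c` of `Fin 2`: the identity for `c = 0`, the swap for `c = 1`.
  by_cases h : ∃ i, w (i + 2) = w i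
  · obtain ⟨i, hi⟩ := h
    exact ⟨[w i], List.cons_ne_nil _ _, (· + (w (i + 1) - w i)), (fin_two_add_add_cancel · _),
      factorOf_of_period_two_letter hi⟩
  · push Not at h
    exact ⟨[w 0, w 1], List.cons_ne_nil _ _, (· + 1), (fin_two_add_add_cancel · 1),
      factorOf_of_antiperiodic h⟩
end

section
/- There is no infinite binary word that avoids the pattern α θ(α) α for all antimorphic involutions θ on {a,b}*. That is, every infinite word w over {a,b} has a factor of the form u θ(u) u for some nonempty word u and some antimorphic involution θ. -/
variable {α : Type*}

def ContainsAThetaA (w : ℕ → α) : Prop :=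
  ∃ u : List α, u ≠ [] ∧ ∃ g : α → α, (∀ z, g (g z) = z) ∧
    FactorOf (u ++ (u.map g).reverse ++ u) w

lemma containsAThetaA_of_apply_add_two_eq [DecidableEq α] {w : ℕ → α} {i : ℕ}
    (h : w (i + 2) = w i) : ContainsAThetaA w :=
  ⟨[w i], by simp, Equiv.swap (w i) (w (i + 1)), Equiv.swap_apply_self _ _, i,
    by simp [List.range_succ, h]⟩

lemma containsAThetaA_of_abbaab {w : ℕ → α} {i : ℕ} (h₂ : w (i + 2) = w (i + 1))
    (h₃ : w (i + 3) = w i) (h₄ : w (i + 4) = w i) (h₅ : w (i + 5) = w (i + 1)) :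
    ContainsAThetaA w :=
  ⟨[w i, w (i + 1)], by simp, id, fun _ => rfl, i, by simp [List.range_succ, h₂, h₃, h₄, h₅]⟩

lemma Fin.eq_of_ne_of_ne_two {x y z : Fin 2} (hx : x ≠ z) (hy : y ≠ z) : x = y := by
  omega

lemma containsAThetaA_of_forall_apply_add_two_ne {w : ℕ → Fin 2}
    (h : ∀ i, w (i + 2) ≠ w i) : ContainsAThetaA w := by
  obtain ⟨i, hi⟩ : ∃ i, w i ≠ w (i + 1) := by
    by_cases h₀₁ : w 0 = w 1
    · exact ⟨1, fun e => h 0 (e ▸ h₀₁).symm⟩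
    · exact ⟨0, h₀₁⟩
  have h₂ : w (i + 2) = w (i + 1) := Fin.eq_of_ne_of_ne_two (h i) hi.symm
  have h₃ : w (i + 3) = w i := Fin.eq_of_ne_of_ne_two (h (i + 1)) hi
  have h₄ : w (i + 4) = w i := Fin.eq_of_ne_of_ne_two (h₂ ▸ h (i + 2)) hi
  have h₅ : w (i + 5) = w (i + 1) := Fin.eq_of_ne_of_ne_two (h₃ ▸ h (i + 3)) hi.symm
  exact containsAThetaA_of_abbaab h₂ h₃ h₄ h₅

/-- No infinite binary word avoids `α θ(α) α` for all antimorphic involutions: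
every `w : ℕ → Fin 2` has a factor `u ++ θ(u) ++ u` for some nonempty `u`
and some antimorphic involution `θ` (a letter involution `g` composed with
reversal). -/
theorem binary_contains_a_ta_a_antimorphic (w : ℕ → Fin 2) :
    ∃ u : List (Fin 2), u ≠ [] ∧ ∃ g : Fin 2 → Fin 2, (∀ z, g (g z) = z) ∧
      FactorOf (u ++ (u.map g).reverse ++ u) w := by
  by_cases hxyx : ∃ i, w (i + 2) = w i
  · obtain ⟨i, hi⟩ := hxyx
    exact containsAThetaA_of_apply_add_two_eq hi
  · push Not at hxyx
    exact containsAThetaA_of_forall_apply_add_two_ne hxyx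
end

section
/- Let w be the infinite word over {a,b,c} obtained from the Thue–Morse word by replacing each a' by aacb and each b' by accb. Then for every morphic involution θ on {a,b,c}* and every nonempty word u, the word u θ(u) u is not a factor of w. Hence the morphic θ-avoidance index of α θ(α) α equals 3. -/
def OverlapAt {β : Type*} (s : ℕ → β) (q m : ℕ) : Prop :=
  ∀ k ≤ m, s (q + k) = s (q + k + m)

def IsThueMorseLike (t : ℕ → Bool) : Prop :=
  ∀ n, t (2 * n) = t n ∧ t (2 * n + 1) = !t n

namespace IsThueMorseLike

variable {t : ℕ → Bool}

lemma succ_eq_not_of_even (ht : IsThueMorseLike t) {n : ℕ} (hn : n % 2 = 0) :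
    t (n + 1) = !t n := by
  obtain ⟨r, rfl⟩ : ∃ r, n = 2 * r := ⟨n / 2, by omega⟩
  rw [(ht r).1, (ht r).2]

lemma two_mul_add_eq_iff (ht : IsThueMorseLike t) {e : ℕ} (he : e < 2) (a b : ℕ) :
    t (2 * a + e) = t (2 * b + e) ↔ t a = t b := by
  interval_cases e
  · simp only [Nat.add_zero, (ht a).1, (ht b).1]
  · simp [(ht a).2, (ht b).2]

lemma not_three_eq (ht : IsThueMorseLike t) (n : ℕ) :
    ¬ (t n = t (n + 1) ∧ t (n + 1) = t (n + 2)) := by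
  rintro ⟨h₁, h₂⟩
  rcases Nat.even_or_odd' n with ⟨r, rfl | rfl⟩
  · simp [ht.succ_eq_not_of_even (n := 2 * r) (by omega)] at h₁
  · simp [ht.succ_eq_not_of_even (n := 2 * r + 1 + 1) (by omega)] at h₂

lemma overlapAt_half (ht : IsThueMorseLike t) {q j : ℕ} (h : OverlapAt t q (2 * j)) :
    OverlapAt t (q / 2) j := by
  intro k hk
  have hk' := h (2 * k) (by omega)
  rwa [show q + 2 * k = 2 * (q / 2 + k) + q % 2 by omega,
    show 2 * (q / 2 + k) + q % 2 + 2 * j = 2 * (q / 2 + k + j) + q % 2 by omega,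
    ht.two_mul_add_eq_iff (Nat.mod_lt q two_pos)] at hk'

lemma succ_eq_not_of_overlapAt_odd (ht : IsThueMorseLike t) {q m : ℕ} (hm : m % 2 = 1)
    (h : OverlapAt t q m) {n : ℕ} (hqn : q ≤ n) (hn : n < q + 2 * m) :
    t (n + 1) = !t n := by
  -- `t` alternates from every even position, and the odd period `m` swaps the parity of positions.
  have left : ∀ k < m, t (q + k + 1) = !t (q + k) := by
    intro k hk
    by_cases hpar : (q + k) % 2 = 0
    · exact ht.succ_eq_not_of_even hpar
    · have hshift := ht.succ_eq_not_of_even (n := q + k + m) (by omega)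
      rwa [← h k hk.le, show q + k + m + 1 = q + (k + 1) + m by omega, ← h (k + 1) hk] at hshift
  by_cases hlt : n < q + m
  · simpa [show q + (n - q) = n by omega] using left (n - q) (by omega)
  · have hk := left (n - q - m) (by omega)
    rwa [h (n - q - m) (by omega), show q + (n - q - m) + 1 = q + (n - q - m + 1) by omega,
      h (n - q - m + 1) (by omega), show q + (n - q - m + 1) + m = n + 1 by omega,
      show q + (n - q - m) + m = n by omega] at hk

lemma not_overlapAt_odd (ht : IsThueMorseLike t) {m : ℕ} (hm : m % 2 = 1) (q : ℕ) :
    ¬ OverlapAt t q m := by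
  intro h
  obtain rfl | hm3 : m = 1 ∨ 3 ≤ m := by omega
  · exact ht.not_three_eq q
      ⟨by simpa using h 0 (by omega), by simpa [add_assoc] using h 1 le_rfl⟩
  -- `t` alternates on six positions starting at an even one, so it is constant on three
  -- consecutive positions of the halved word.
  obtain ⟨r, hr⟩ : ∃ r, q ≤ 2 * r ∧ 2 * r ≤ q + 1 := ⟨(q + 1) / 2, by omega, by omega⟩
  have alt : ∀ i < 4, t (2 * r + i + 1) = !t (2 * r + i) := fun i hi =>
    ht.succ_eq_not_of_overlapAt_odd hm h (by omega) (by omega)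
  have a₀ := alt 0 (by omega); have a₁ := alt 1 (by omega)
  have a₂ := alt 2 (by omega); have a₃ := alt 3 (by omega)
  simp only [add_zero, add_assoc, Nat.reduceAdd] at a₀ a₁ a₂ a₃
  refine ht.not_three_eq r ⟨?_, ?_⟩
  · rw [← (ht r).1, ← (ht (r + 1)).1, mul_add, mul_one, a₁, a₀, Bool.not_not]
  · rw [← (ht (r + 1)).1, ← (ht (r + 2)).1, mul_add, mul_add, a₃, a₂, Bool.not_not]

theorem not_overlapAt (ht : IsThueMorseLike t) {m : ℕ} (hm : 0 < m) (q : ℕ) :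
    ¬ OverlapAt t q m := by
  induction m using Nat.strong_induction_on generalizing q with
  | _ m ih =>
  obtain ⟨j, rfl⟩ | hodd : (∃ j, m = 2 * j) ∨ m % 2 = 1 := by
    rcases Nat.even_or_odd' m with ⟨j, rfl | rfl⟩ <;> simp
  · exact fun h => ih j (by omega) (by omega) (q / 2) (ht.overlapAt_half h)
  · exact ht.not_overlapAt_odd hodd q

end IsThueMorseLike

section Factor

variable {α : Type*} {v u : List α} {w : ℕ → α}

lemma FactorOf.exists_getElem_eq (h : FactorOf v w) :
    ∃ i, ∀ j (hj : j < v.length), v[j] = w (i + j) := by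
  obtain ⟨i, hv⟩ := h
  refine ⟨i, fun j hj => ?_⟩
  rw [List.getElem_of_eq hv hj]
  simp

lemma FactorOf.exists_of_append_map_append {g : α → α} (h : FactorOf (u ++ u.map g ++ u) w) :
    ∃ i, ∀ j < u.length,
      w (i + u.length + j) = g (w (i + j)) ∧ w (i + 2 * u.length + j) = w (i + j) := by
  obtain ⟨i, hi⟩ := h.exists_getElem_eq
  have hlen₂ : (u ++ u.map g).length = 2 * u.length := by
    rw [List.length_append, List.length_map, two_mul]
  have hlen₃ : (u ++ u.map g ++ u).length = 3 * u.length := by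
    rw [List.length_append, hlen₂]; ring
  refine ⟨i, fun j hj => ?_⟩
  have h₁ := hi j (by omega)
  have h₂ := hi (u.length + j) (by omega)
  have h₃ := hi (2 * u.length + j) (by omega)
  rw [List.getElem_append_left (by omega), List.getElem_append_left hj] at h₁
  rw [List.getElem_append_left (by omega), List.getElem_append_right (by omega)] at h₂
  rw [List.getElem_append_right (by omega)] at h₃
  simp only [add_tsub_cancel_left, List.getElem_map, hlen₂,
    show 2 * u.length + j - 2 * u.length = j by omega] at h₂ h₃
  rw [add_assoc, add_assoc, ← h₂, ← h₃, ← h₁]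
  exact ⟨rfl, rfl⟩

lemma factorOf_of_isInfix_ofFn {n : ℕ} (h : v <:+: List.ofFn fun j : Fin n => w j) :
    FactorOf v w := by
  obtain ⟨s, s', hs⟩ := h
  refine ⟨s.length, List.ext_getElem (by simp) fun j hj _ => ?_⟩
  have hlt : s.length + j < (s ++ v ++ s').length := by
    rw [List.length_append, List.length_append]; omega
  have := List.getElem_of_eq hs hlt
  simp only [List.append_assoc, le_add_iff_nonneg_right, zero_le, List.getElem_append_right,
    add_tsub_cancel_left, hj, List.getElem_append_left, List.getElem_ofFn] at this
  simpa only [List.getElem_map, List.getElem_range] using this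

end Factor

def AvoidsAlphaThetaAlpha {α : Type*} (w : ℕ → α) : Prop :=
  ∀ g : α → α, Function.Involutive g →
    ∀ u : List α, u ≠ [] → ¬ FactorOf (u ++ u.map g ++ u) w

lemma exists_isInfix_ofFn_fin_two : ∀ f : Fin 6 → Fin 2,
    ∃ g ∈ [id, (· + 1)], ∃ x : Fin 2, ∃ y ∈ ([[], [0], [1]] : List (List (Fin 2))),
      (x :: y) ++ (x :: y).map g ++ (x :: y) <:+: List.ofFn f := by
  decide

lemma not_avoidsAlphaThetaAlpha_of_le_two {k : ℕ} (hk : k ≤ 2) (w : ℕ → Fin k) :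
    ¬ AvoidsAlphaThetaAlpha w := by
  intro h
  interval_cases k
  · exact (w 0).elim0
  · refine h id (fun _ => rfl) [w 0] (List.cons_ne_nil _ _) ⟨0, ?_⟩
    simp [List.range_succ, Subsingleton.elim (w _) (w 0)]
  · obtain ⟨g, hg, x, y, -, hxy⟩ := exists_isInfix_ofFn_fin_two fun j => w j
    have hg' : Function.Involutive g := by
      simp only [List.mem_cons, List.not_mem_nil, or_false] at hg
      rcases hg with rfl | rfl
      · exact fun _ => rfl
      · exact fun z => by fin_cases z <;> rfl
    exact h g hg' (x :: y) (List.cons_ne_nil _ _) (factorOf_of_isInfix_ofFn hxy)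

lemma Function.Involutive.fin_three_map_one_eq_one {g : Fin 3 → Fin 3}
    (hg : Function.Involutive g) {x : Fin 3} (hx : x ≠ 1) (hgx : g x ≠ 1) (hne : g x ≠ x) :
    g 1 = 1 := by
  revert g x
  unfold Function.Involutive
  decide

def blockImage (t : ℕ → Bool) (n : ℕ) : Fin 3 :=
  (if t (n / 4) then ([0, 2, 2, 1] : List (Fin 3)) else [0, 0, 2, 1]).getD (n % 4) 0

section blockImage

variable {t : ℕ → Bool} {g : Fin 3 → Fin 3} {m n L : ℕ}

lemma blockImage_of_mod_four_eq_zero (h : n % 4 = 0) : blockImage t n = 0 := by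
  simp only [blockImage, h]; split <;> rfl

lemma blockImage_of_mod_four_eq_two (h : n % 4 = 2) : blockImage t n = 2 := by
  simp only [blockImage, h]; split <;> rfl

lemma blockImage_eq_one_iff : blockImage t n = 1 ↔ n % 4 = 3 := by
  obtain h | h | h | h : n % 4 = 0 ∨ n % 4 = 1 ∨ n % 4 = 2 ∨ n % 4 = 3 := by omega
  all_goals simp only [blockImage, h]; split_ifs <;> decide

lemma blockImage_four_mul_add_one : blockImage t (4 * n + 1) = if t n then 2 else 0 := by
  simp only [blockImage, show (4 * n + 1) / 4 = n by omega, show (4 * n + 1) % 4 = 1 by omega]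
  split_ifs <;> rfl

lemma blockImage_eq_of_mod_four_eq (hn : n % 4 ≠ 1) (h : m % 4 = n % 4) :
    blockImage t m = blockImage t n := by
  obtain h' | h' | h' : n % 4 = 0 ∨ n % 4 = 2 ∨ n % 4 = 3 := by omega
  all_goals simp only [blockImage, h, h']; split_ifs <;> rfl

lemma blockImage_ne_of_mod_four_eq_add_two (h : m % 4 = (n + 2) % 4) :
    blockImage t m ≠ blockImage t n := by
  by_cases hn : n % 2 = 0
  · obtain h' | h' : n % 4 = 0 ∨ n % 4 = 2 := by omega
    · rw [blockImage_of_mod_four_eq_two (by omega), blockImage_of_mod_four_eq_zero h']; decide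
    · rw [blockImage_of_mod_four_eq_zero (by omega), blockImage_of_mod_four_eq_two h']; decide
  · intro hmn
    have hone := blockImage_eq_one_iff (t := t) (n := m)
    rw [hmn, blockImage_eq_one_iff] at hone
    omega

lemma exists_blockImage_eq (i : ℕ) (x : Fin 3) :
    ∃ j < 4, (i + j) % 4 ≠ 1 ∧ blockImage t (i + j) = x := by
  fin_cases x
  · exact ⟨(4 - i % 4) % 4, by omega, by omega, blockImage_of_mod_four_eq_zero (by omega)⟩
  · exact ⟨(7 - i % 4) % 4, by omega, by omega, blockImage_eq_one_iff.mpr (by omega)⟩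
  · exact ⟨(6 - i % 4) % 4, by omega, by omega, blockImage_of_mod_four_eq_two (by omega)⟩

lemma not_blockImage_shift_eq_map_of_mod_four_eq_two (hg : Function.Involutive g)
    (hL : L % 4 = 2) (i : ℕ) :
    ¬ ∀ j < 2, blockImage t (i + L + j) = g (blockImage t (i + j)) := by
  intro h
  have shift : ∀ n, (n = i ∨ n = i + 1) → blockImage t (n + L) = g (blockImage t n) := by
    rintro n (rfl | rfl)
    · simpa using h 0 (by omega)
    · simpa [add_right_comm] using h 1 (by omega)
  obtain ⟨e, o, he, ho, hee, hoo⟩ : ∃ e o, (e = i ∨ e = i + 1) ∧ (o = i ∨ o = i + 1) ∧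
      e % 2 = 0 ∧ o % 2 = 1 := by
    by_cases hi : i % 2 = 0
    · exact ⟨i, i + 1, .inl rfl, .inr rfl, hi, by omega⟩
    · exact ⟨i + 1, i, .inr rfl, .inl rfl, by omega, by omega⟩
  -- At an even position `g` exchanges `a` and `c`, hence fixes `b` ...
  have hg1 : g 1 = 1 := hg.fin_three_map_one_eq_one (x := blockImage t e)
    (blockImage_eq_one_iff.not.mpr (by omega))
    (by rw [← shift e he]; exact blockImage_eq_one_iff.not.mpr (by omega))
    (by rw [← shift e he]; exact blockImage_ne_of_mod_four_eq_add_two (by omega))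
  -- ... but at an odd position it exchanges `b` with `a` or `c`.
  have hiff : blockImage t (o + L) = 1 ↔ blockImage t o = 1 := by
    rw [shift o ho]
    exact ⟨fun h => hg.injective (h.trans hg1.symm), fun h => h ▸ hg1⟩
  rw [blockImage_eq_one_iff, blockImage_eq_one_iff] at hiff
  omega

lemma IsThueMorseLike.not_periodic_blockImage (ht : IsThueMorseLike t) {m : ℕ} (hm : 0 < m)
    (i : ℕ) : ¬ ∀ j < 8 * m, blockImage t (i + j + 4 * m) = blockImage t (i + j) := by
  intro h
  refine ht.not_overlapAt hm ((i + 2) / 4) fun k hk => ?_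
  have hk' := h (4 * ((i + 2) / 4 + k) + 1 - i) (by omega)
  rw [show i + (4 * ((i + 2) / 4 + k) + 1 - i) = 4 * ((i + 2) / 4 + k) + 1 by omega,
    show 4 * ((i + 2) / 4 + k) + 1 + 4 * m = 4 * ((i + 2) / 4 + k + m) + 1 by ring,
    blockImage_four_mul_add_one, blockImage_four_mul_add_one] at hk'
  split_ifs at hk' <;> simp_all

lemma IsThueMorseLike.not_blockImage_shift_eq_map_of_mod_four_eq_zero (ht : IsThueMorseLike t)
    (hL₀ : 0 < L) (hL : L % 4 = 0) (i : ℕ) :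
    ¬ ∀ j < L, blockImage t (i + L + j) = g (blockImage t (i + j)) ∧
      blockImage t (i + 2 * L + j) = blockImage t (i + j) := by
  intro h
  -- Each letter occurs among the positions `i, …, i + 3` at a residue other than `1`, where the
  -- letter depends only on the residue; hence `g` fixes it.
  have hg : ∀ x, g x = x := by
    intro x
    obtain ⟨j, hj, hres, rfl⟩ := exists_blockImage_eq (t := t) i x
    rw [← (h j (by omega)).1, blockImage_eq_of_mod_four_eq hres (by omega)]
  refine ht.not_periodic_blockImage (m := L / 4) (by omega) i fun j hj => ?_
  rw [show 4 * (L / 4) = L by omega]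
  by_cases hjL : j < L
  · rw [add_right_comm, (h j hjL).1, hg]
  · have := h (j - L) (by omega)
    rw [show i + j + L = i + 2 * L + (j - L) by omega, show i + j = i + L + (j - L) by omega,
      this.1, this.2, hg]

theorem IsThueMorseLike.avoidsAlphaThetaAlpha_blockImage (ht : IsThueMorseLike t) :
    AvoidsAlphaThetaAlpha (blockImage t) := by
  intro g hg u hu hf
  obtain ⟨i, hi⟩ := hf.exists_of_append_map_append
  have hL : 0 < u.length := List.length_pos_iff.mpr hu
  obtain hodd | htwo | hzero : u.length % 2 = 1 ∨ u.length % 4 = 2 ∨ u.length % 4 = 0 := by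
    omega
  · exact blockImage_ne_of_mod_four_eq_add_two (by omega) (hi 0 hL).2
  · exact not_blockImage_shift_eq_map_of_mod_four_eq_two hg htwo i fun j hj => (hi j (by omega)).1
  · exact ht.not_blockImage_shift_eq_map_of_mod_four_eq_zero hL hzero i hi

end blockImage

theorem morphic_index_a_ta_a_eq_three_general (t : ℕ → Bool)
    (hfix : ∀ n : ℕ, t (2 * n) = t n ∧ t (2 * n + 1) = !(t n))
    (w : ℕ → Fin 3)
    (hw : ∀ n : ℕ, w n =
      (if t (n / 4) then ([0, 2, 2, 1] : List (Fin 3))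
       else ([0, 0, 2, 1] : List (Fin 3))).getD (n % 4) 0) :
    (∀ g : Fin 3 → Fin 3, (∀ z, g (g z) = z) →
      ∀ u : List (Fin 3), u ≠ [] → ¬ FactorOf (u ++ u.map g ++ u) w) ∧
    IsLeast {k : ℕ | ∃ w' : ℕ → Fin k,
      ∀ g : Fin k → Fin k, (∀ z, g (g z) = z) →
        ∀ u : List (Fin k), u ≠ [] → ¬ FactorOf (u ++ u.map g ++ u) w'} 3 := by
  obtain rfl : w = blockImage t := funext hw
  have havoids : AvoidsAlphaThetaAlpha (blockImage t) :=
    IsThueMorseLike.avoidsAlphaThetaAlpha_blockImage hfix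
  refine ⟨havoids, ⟨_, havoids⟩, fun k ⟨w', hw'⟩ => ?_⟩
  by_contra! hk
  exact not_avoidsAlphaThetaAlpha_of_le_two (by omega) w' hw'

/-- Letters: `a = 0`, `b = 1`, `c = 2` in `Fin 3`.
Let `t` be the Thue–Morse word (fixed point of `a' ↦ a'b'`, `b' ↦ b'a'`,
starting with `a' = false`) and let `w` be its image under `a' ↦ aacb`,
`b' ↦ accb`.  Then for every morphic involution `θ` on `{a,b,c}*` (induced by
a letter involution `g`) and every nonempty `u`, the word `u θ(u) u` is not a
factor of `w`; hence the morphic θ-avoidance index of `α θ(α) α` equals `3`. -/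
theorem morphic_index_a_ta_a_eq_three (t : ℕ → Bool)
    (h0 : t 0 = false)
    (hfix : ∀ n : ℕ, t (2 * n) = t n ∧ t (2 * n + 1) = !(t n))
    (w : ℕ → Fin 3)
    (hw : ∀ n : ℕ, w n =
      (if t (n / 4) then ([0, 2, 2, 1] : List (Fin 3))
       else ([0, 0, 2, 1] : List (Fin 3))).getD (n % 4) 0) :
    (∀ g : Fin 3 → Fin 3, (∀ z, g (g z) = z) →
      ∀ u : List (Fin 3), u ≠ [] → ¬ FactorOf (u ++ u.map g ++ u) w) ∧
    IsLeast {k : ℕ | ∃ w' : ℕ → Fin k,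
      ∀ g : Fin k → Fin k, (∀ z, g (g z) = z) →
        ∀ u : List (Fin k), u ≠ [] → ¬ FactorOf (u ++ u.map g ++ u) w'} 3 :=
  morphic_index_a_ta_a_eq_three_general t hfix w hw
end

section
/- Let w be the infinite word over {a,b,c} obtained from the Thue–Morse word by replacing each a' by aabbc and each b' by aaccb. Then for every antimorphic involution θ on {a,b,c}* and every nonempty word u, the word u θ(u) u is not a factor of w. Hence the antimorphic θ-avoidance index of α θ(α) α equals 3. -/
open Function

section Pattern

variable {α : Type*}

/-- The factor of `w` of length `3 * n` at position `i` has the form `u θ(u) u`, where `θ` is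
reversal composed with the letter map `g`. -/
def PatternAt (g : α → α) (w : ℕ → α) (i n : ℕ) : Prop :=
  (∀ j < n, w (i + (n + j)) = g (w (i + (n - 1 - j)))) ∧ ∀ j < n, w (i + (2 * n + j)) = w (i + j)

instance [DecidableEq α] (g : α → α) (w : ℕ → α) (i n : ℕ) : Decidable (PatternAt g w i n) := by
  unfold PatternAt; infer_instance

theorem factorOf_iff_getElem {v : List α} {w : ℕ → α} :
    FactorOf v w ↔ ∃ i, ∀ j (hj : j < v.length), v[j] = w (i + j) := by
  simp [FactorOf, List.ext_getElem_iff]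

theorem PatternAt.of_factorOf {g : α → α} {u : List α} {w : ℕ → α}
    (h : FactorOf (u ++ (u.map g).reverse ++ u) w) : ∃ i, PatternAt g w i u.length := by
  obtain ⟨i, hi⟩ := factorOf_iff_getElem.1 h
  have hu : ∀ j (hj : j < u.length), w (i + j) = u[j] := fun j hj => by
    rw [← hi j (by simp; omega)]
    simp [List.getElem_append_left, hj]
  refine ⟨i, fun j hj => ?_, fun j hj => ?_⟩
  · rw [← hi (u.length + j) (by simp; omega), hu _ (by omega)]
    simp [List.getElem_append_left, List.getElem_append_right, hj]
  · rw [← hi (2 * u.length + j) (by simp; omega), hu _ hj]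
    simp only [List.getElem_append, List.length_append, List.length_reverse, List.length_map]
    rw [dif_neg (by omega)]
    congr 1
    omega

theorem PatternAt.factorOf {g : α → α} {w : ℕ → α} {i n : ℕ} (h : PatternAt g w i n) :
    let u := (List.range n).map fun j => w (i + j)
    FactorOf (u ++ (u.map g).reverse ++ u) w := by
  intro u
  refine factorOf_iff_getElem.2 ⟨i, fun j hj => ?_⟩
  simp only [List.length_append, List.length_reverse, List.length_map, List.length_range, u] at hj
  simp only [u, List.getElem_append, List.length_append, List.length_reverse, List.length_map,
    List.length_range, List.getElem_reverse, List.getElem_map, List.getElem_range]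
  split_ifs
  · rfl
  · obtain ⟨k, rfl⟩ : ∃ k, j = n + k := ⟨j - n, by omega⟩
    rw [Nat.add_sub_cancel_left]
    exact (h.1 k (by omega)).symm
  · obtain ⟨k, rfl⟩ : ∃ k, j = 2 * n + k := ⟨j - 2 * n, by omega⟩
    rw [show 2 * n + k - (n + n) = k by omega]
    exact (h.2 k (by omega)).symm

theorem PatternAt.congr {g : α → α} {w w' : ℕ → α} {i i' n : ℕ}
    (hw : ∀ j < 3 * n, w (i + j) = w' (i' + j)) (h : PatternAt g w i n) : PatternAt g w' i' n :=
  ⟨fun j hj => by rw [← hw _ (by omega), ← hw _ (by omega)]; exact h.1 j hj,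
   fun j hj => by rw [← hw _ (by omega), ← hw _ (by omega)]; exact h.2 j hj⟩

theorem PatternAt.apply_add_two_mul {g : α → α} {w : ℕ → α} {i n : ℕ} (h : PatternAt g w i n)
    {p : ℕ} (hip : i ≤ p) (hpi : p < i + n) : w (p + 2 * n) = w p := by
  obtain ⟨j, rfl⟩ : ∃ j, p = i + j := ⟨p - i, by omega⟩
  rw [add_assoc, add_comm j]
  exact h.2 j (by omega)

theorem PatternAt.apply_mirror {g : α → α} (hg : Involutive g) {w : ℕ → α} {i n : ℕ}
    (h : PatternAt g w i n) {p q : ℕ} (hpq : p + q + 1 = 2 * (i + n)) (hip : i ≤ p)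
    (hpi : p < i + 2 * n) : w q = g (w p) := by
  rcases lt_or_ge p (i + n) with hp | hp
  · obtain ⟨j, rfl⟩ : ∃ j, q = i + (n + j) := ⟨q - (i + n), by omega⟩
    rw [h.1 j (by omega), show i + (n - 1 - j) = p by omega]
  · obtain ⟨j, rfl⟩ : ∃ j, p = i + (n + j) := ⟨p - (i + n), by omega⟩
    rw [h.1 j (by omega), hg, show i + (n - 1 - j) = q by omega]

theorem patternAt_swap_of_apply_add_two_eq [DecidableEq α] {w : ℕ → α} {i : ℕ}
    (h : w (i + 2) = w i) : PatternAt (Equiv.swap (w i) (w (i + 1))) w i 1 := by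
  refine ⟨fun j hj => ?_, fun j hj => ?_⟩ <;> obtain rfl : j = 0 := by omega
  · simp
  · exact h

end Pattern

theorem patternAt_swap_of_forall_apply_add_two_ne {w : ℕ → Fin 2} (h : ∀ i, w (i + 2) ≠ w i) :
    PatternAt (Equiv.swap (w 1) (w 2)) w 0 2 := by
  have binary : ∀ a b c d e f : Fin 2, c ≠ a → d ≠ b → e ≠ c → f ≠ d →
      d = Equiv.swap b c a ∧ e = a ∧ f = b := by
    decide
  obtain ⟨h3, h4, h5⟩ := binary _ _ _ _ _ _ (h 0) (h 1) (h 2) (h 3)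
  refine ⟨fun j hj => ?_, fun j hj => ?_⟩ <;> interval_cases j
  · simp
  · exact h3
  · exact h4
  · exact h5

theorem exists_patternAt_of_le_two {k : ℕ} (hk : k ≤ 2) (w : ℕ → Fin k) :
    ∃ g : Fin k → Fin k, Involutive g ∧ ∃ i n, 0 < n ∧ PatternAt g w i n := by
  by_cases hrep : ∃ i, w (i + 2) = w i
  · obtain ⟨i, hi⟩ := hrep
    exact ⟨_, Equiv.swap_apply_self _ _, i, 1, one_pos, patternAt_swap_of_apply_add_two_eq hi⟩
  push Not at hrep
  interval_cases k
  · exact (w 0).elim0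
  · exact absurd (Subsingleton.elim _ _) (hrep 0)
  · exact ⟨_, Equiv.swap_apply_self _ _, 0, 2, two_pos,
      patternAt_swap_of_forall_apply_add_two_ne hrep⟩

section ThueMorse

variable {t : ℕ → Bool}

theorem thueMorse_two_mul_ne (hfix : ∀ n : ℕ, t (2 * n) = t n ∧ t (2 * n + 1) = !(t n))
    (m : ℕ) : t (2 * m) ≠ t (2 * m + 1) := by
  rw [(hfix m).1, (hfix m).2]
  exact Bool.self_ne_not _

theorem thueMorse_not_three_eq (hfix : ∀ n : ℕ, t (2 * n) = t n ∧ t (2 * n + 1) = !(t n))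
    (k : ℕ) : ¬(t k = t (k + 1) ∧ t (k + 1) = t (k + 2)) := by
  rintro ⟨h₁, h₂⟩
  obtain ⟨m, rfl | rfl⟩ := Nat.even_or_odd' k
  · exact thueMorse_two_mul_ne hfix m h₁
  · exact thueMorse_two_mul_ne hfix (m + 1) h₂

end ThueMorse

def blockLetter (b : Bool) (r : ℕ) : Fin 3 :=
  (if b then ([0, 0, 2, 2, 1] : List (Fin 3)) else [0, 0, 1, 1, 2]).getD r 0

/-- The image of `t` under `false ↦ aabbc`, `true ↦ aaccb`, with letters `a, b, c = 0, 1, 2`. -/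
def morphImage (t : ℕ → Bool) (n : ℕ) : Fin 3 :=
  blockLetter (t (n / 5)) (n % 5)

theorem blockLetter_eq_zero_iff : ∀ b : Bool, ∀ r < 5, blockLetter b r = 0 ↔ r < 2 := by
  decide

theorem blockLetter_eq_succ : ∀ b : Bool, ∀ r < 4, blockLetter b r = blockLetter b (r + 1) →
    r = 0 ∨ r = 2 := by
  decide

theorem blockLetter_four_ne_blockLetter_zero (b b' : Bool) :
    blockLetter b 4 ≠ blockLetter b' 0 := by
  cases b <;> cases b' <;> decide

theorem blockLetter_two_injective : Injective (blockLetter · 2) := by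
  decide

section MorphImage

variable {t : ℕ → Bool}

theorem morphImage_eq_zero_iff {p : ℕ} : morphImage t p = 0 ↔ p % 5 < 2 :=
  blockLetter_eq_zero_iff _ _ (Nat.mod_lt _ (by norm_num))

theorem mod_five_of_morphImage_eq_succ {p : ℕ} (h : morphImage t p = morphImage t (p + 1)) :
    p % 5 = 0 ∨ p % 5 = 2 := by
  unfold morphImage at h
  by_cases hp : p % 5 = 4
  · rw [show (p + 1) % 5 = 0 by omega, hp] at h
    exact absurd h (blockLetter_four_ne_blockLetter_zero _ _)
  · rw [show (p + 1) / 5 = p / 5 by omega, show (p + 1) % 5 = p % 5 + 1 by omega] at h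
    exact blockLetter_eq_succ _ _ (by omega) h

theorem morphImage_eq_succ_of_mod_five_eq_two {p : ℕ} (hp : p % 5 = 2) :
    morphImage t p = morphImage t (p + 1) := by
  unfold morphImage
  rw [show (p + 1) / 5 = p / 5 by omega, show (p + 1) % 5 = 3 by omega, hp]
  cases t (p / 5) <;> rfl

theorem eq_of_morphImage_eq_of_mod_five_eq_two {p q : ℕ} (hp : p % 5 = 2) (hq : q % 5 = 2)
    (h : morphImage t p = morphImage t q) : t (p / 5) = t (q / 5) := by
  unfold morphImage at h
  rw [hp, hq] at h
  exact blockLetter_two_injective h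

theorem morphImage_five_mul_add {t' : ℕ → Bool} {m x : ℕ} (h : ∀ d ≤ x / 5, t (m + d) = t' d) :
    morphImage t (5 * m + x) = morphImage t' x := by
  unfold morphImage
  rw [show (5 * m + x) / 5 = m + x / 5 by omega, show (5 * m + x) % 5 = x % 5 by omega, h _ le_rfl]

end MorphImage

-- `r + 3 * n < 20`: the factor lies in the image of `b₀ b₁ b₂ b₃`.
theorem not_patternAt_four_blocks :
    ∀ b₀ b₁ b₂ b₃ : Bool, ¬(b₀ = b₁ ∧ b₁ = b₂) → ¬(b₁ = b₂ ∧ b₂ = b₃) →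
      ∀ g : Fin 3 → Fin 3, (∀ z, g (g z) = z) → ∀ r < 5, ∀ n < 6, 0 < n →
      ¬PatternAt g (morphImage fun k => [b₀, b₁, b₂, b₃].getD k false) r n := by
  decide

section Avoidance

variable {t : ℕ → Bool} {g : Fin 3 → Fin 3} {i n : ℕ}

theorem PatternAt.false_of_le_five (ht : ∀ k, ¬(t k = t (k + 1) ∧ t (k + 1) = t (k + 2)))
    (hg : Involutive g) (h : PatternAt g (morphImage t) i n) (hn₀ : 0 < n) (hn : n ≤ 5) :
    False := by
  have hwin : ∀ j < 3 * n, morphImage t (i + j) = morphImage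
      (fun k => [t (i / 5), t (i / 5 + 1), t (i / 5 + 2), t (i / 5 + 3)].getD k false)
      (i % 5 + j) := by
    intro j hj
    rw [show i + j = 5 * (i / 5) + (i % 5 + j) by omega]
    refine morphImage_five_mul_add fun d hd => ?_
    have hd4 : d < 4 := by omega
    interval_cases d <;> rfl
  exact not_patternAt_four_blocks _ _ _ _ (ht _) (ht _) g hg (i % 5) (Nat.mod_lt _ (by norm_num))
    n (by omega) hn₀ (h.congr hwin)

theorem PatternAt.five_dvd (h : PatternAt g (morphImage t) i n) (hn : 6 ≤ n) : 5 ∣ n := by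
  obtain ⟨s, hs, his, hsi⟩ : ∃ s, s % 5 = 0 ∧ i ≤ s ∧ s ≤ i + 4 :=
    ⟨5 * ((i + 4) / 5), by omega, by omega, by omega⟩
  have h₀ : (s + 2 * n) % 5 < 2 := by
    rw [← morphImage_eq_zero_iff, h.apply_add_two_mul his (by omega), morphImage_eq_zero_iff]
    omega
  have h₁ : (s + 2 * n + 1) % 5 < 2 := by
    rw [← morphImage_eq_zero_iff, show s + 2 * n + 1 = s + 1 + 2 * n by omega,
      h.apply_add_two_mul (by omega) (by omega), morphImage_eq_zero_iff]
    omega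
  have hx : (s + 2 * n) % 5 = 0 := by omega
  omega

theorem PatternAt.two_mul_add_mod_five (hg : Involutive g) (h : PatternAt g (morphImage t) i n)
    (hn : 6 ≤ n) : 2 * (i + n) % 5 = 4 := by
  have reflect : ∀ p, i ≤ p → p + 1 < i + n → morphImage t p = morphImage t (p + 1) →
      (2 * (i + n) - 2 - p) % 5 = 0 ∨ (2 * (i + n) - 2 - p) % 5 = 2 := by
    intro p hip hpi hp
    apply mod_five_of_morphImage_eq_succ
    rw [h.apply_mirror hg (p := p + 1) (by omega) (by omega) (by omega),
      h.apply_mirror hg (p := p) (q := 2 * (i + n) - 2 - p + 1) (by omega) hip (by omega), hp]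
  obtain ⟨s, hs, his, hsi⟩ : ∃ s, s % 5 = 0 ∧ i ≤ s ∧ s ≤ i + 4 :=
    ⟨5 * ((i + 4) / 5), by omega, by omega, by omega⟩
  obtain ⟨s', hs', his', hsi'⟩ : ∃ s, s % 5 = 2 ∧ i ≤ s ∧ s ≤ i + 4 :=
    ⟨5 * ((i + 2) / 5) + 2, by omega, by omega, by omega⟩
  have h₀ := reflect s his (by omega) <| by
    rw [morphImage_eq_zero_iff.2 (by omega), morphImage_eq_zero_iff.2 (by omega)]
  have h₂ := reflect s' his' (by omega) (morphImage_eq_succ_of_mod_five_eq_two hs')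
  omega

theorem PatternAt.false_of_six_le (ht : ∀ k, ¬(t k = t (k + 1) ∧ t (k + 1) = t (k + 2)))
    (hg : Involutive g) (h : PatternAt g (morphImage t) i n) (hn : 6 ≤ n) : False := by
  have hn10 : 10 ≤ n := by
    have := h.five_dvd hn
    omega
  have hc := h.two_mul_add_mod_five hg hn
  have offset_two : ∀ p, p % 5 = 2 → i ≤ p → p < i + 2 * n → morphImage t p = g 0 := by
    intro p hp hip hpi
    have hq := h.apply_mirror hg (q := 2 * (i + n) - 1 - p) (by omega) hip hpi
    rw [morphImage_eq_zero_iff.2 (by omega)] at hq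
    rw [hq, hg]
  obtain ⟨p, hp, hip, hpi⟩ : ∃ p, p % 5 = 2 ∧ i ≤ p ∧ p ≤ i + 4 :=
    ⟨5 * ((i + 2) / 5) + 2, by omega, by omega, by omega⟩
  have e₁ := eq_of_morphImage_eq_of_mod_five_eq_two hp (by omega : (p + 5) % 5 = 2)
    ((offset_two p hp hip (by omega)).trans
      (offset_two (p + 5) (by omega) (by omega) (by omega)).symm)
  have e₂ := eq_of_morphImage_eq_of_mod_five_eq_two (p := p + 5) (q := p + 10) (by omega)
    (by omega) ((offset_two (p + 5) (by omega) (by omega) (by omega)).trans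
      (offset_two (p + 10) (by omega) (by omega) (by omega)).symm)
  rw [show (p + 5) / 5 = p / 5 + 1 by omega] at e₁ e₂
  rw [show (p + 10) / 5 = p / 5 + 2 by omega] at e₂
  exact ht (p / 5) ⟨e₁, e₂⟩

theorem not_patternAt_morphImage (ht : ∀ k, ¬(t k = t (k + 1) ∧ t (k + 1) = t (k + 2)))
    (hg : Involutive g) (hn : 0 < n) : ¬PatternAt g (morphImage t) i n := fun h =>
  (le_or_gt n 5).elim (h.false_of_le_five ht hg hn) fun hn₅ => h.false_of_six_le ht hg hn₅

end Avoidance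

theorem antimorphic_index_a_ta_a_eq_three_general (t : ℕ → Bool)
    (hfix : ∀ n : ℕ, t (2 * n) = t n ∧ t (2 * n + 1) = !(t n))
    (w : ℕ → Fin 3)
    (hw : ∀ n : ℕ, w n =
      (if t (n / 5) then ([0, 0, 2, 2, 1] : List (Fin 3))
       else ([0, 0, 1, 1, 2] : List (Fin 3))).getD (n % 5) 0) :
    (∀ g : Fin 3 → Fin 3, (∀ z, g (g z) = z) →
      ∀ u : List (Fin 3), u ≠ [] →
        ¬ FactorOf (u ++ (u.map g).reverse ++ u) w) ∧
    IsLeast {k : ℕ | ∃ w' : ℕ → Fin k,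
      ∀ g : Fin k → Fin k, (∀ z, g (g z) = z) →
        ∀ u : List (Fin k), u ≠ [] →
          ¬ FactorOf (u ++ (u.map g).reverse ++ u) w'} 3 := by
  obtain rfl : w = morphImage t := funext hw
  have avoids : ∀ g : Fin 3 → Fin 3, (∀ z, g (g z) = z) → ∀ u : List (Fin 3), u ≠ [] →
      ¬FactorOf (u ++ (u.map g).reverse ++ u) (morphImage t) := by
    intro g hg u hu hfac
    obtain ⟨i, hi⟩ := PatternAt.of_factorOf hfac
    exact not_patternAt_morphImage (thueMorse_not_three_eq hfix) hg (List.length_pos_iff.2 hu) hi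
  refine ⟨avoids, ⟨morphImage t, avoids⟩, fun k ⟨w', hw'⟩ => ?_⟩
  by_contra! hk
  obtain ⟨g, hg, i, n, hn, hpat⟩ := exists_patternAt_of_le_two (by omega) w'
  exact hw' g hg _ (by simpa using hn.ne') hpat.factorOf

/-- Letters: `a = 0`, `b = 1`, `c = 2` in `Fin 3`.
Let `t` be the Thue–Morse word and `w` its image under `a' ↦ aabbc`,
`b' ↦ aaccb`.  Then for every antimorphic involution `θ` on `{a,b,c}*`
(a letter involution `g` composed with reversal) and every nonempty `u`,
`u θ(u) u` is not a factor of `w`; hence the antimorphic θ-avoidance index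
of `α θ(α) α` equals `3`. -/
theorem antimorphic_index_a_ta_a_eq_three (t : ℕ → Bool)
    (h0 : t 0 = false)
    (hfix : ∀ n : ℕ, t (2 * n) = t n ∧ t (2 * n + 1) = !(t n))
    (w : ℕ → Fin 3)
    (hw : ∀ n : ℕ, w n =
      (if t (n / 5) then ([0, 0, 2, 2, 1] : List (Fin 3))
       else ([0, 0, 1, 1, 2] : List (Fin 3))).getD (n % 5) 0) :
    (∀ g : Fin 3 → Fin 3, (∀ z, g (g z) = z) →
      ∀ u : List (Fin 3), u ≠ [] →
        ¬ FactorOf (u ++ (u.map g).reverse ++ u) w) ∧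
    IsLeast {k : ℕ | ∃ w' : ℕ → Fin k,
      ∀ g : Fin k → Fin k, (∀ z, g (g z) = z) →
        ∀ u : List (Fin k), u ≠ [] →
          ¬ FactorOf (u ++ (u.map g).reverse ++ u) w'} 3 :=
  antimorphic_index_a_ta_a_eq_three_general t hfix w hw
end

section
/- Every infinite binary word contains the pattern α α θ(α) for some morphic involution θ on {a,b}*, so the morphic θ-avoidance index of α α θ(α) is greater than 2. -/
/-- `w` contains `u u θ(u)` for a nonempty `u` and a morphism `θ` induced by a letter involution. -/
def ContainsSquareThenInvolutionImage {α : Type*} (w : ℕ → α) : Prop :=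
  ∃ u : List α, u ≠ [] ∧ ∃ g : α → α, (∀ z, g (g z) = z) ∧ FactorOf (u ++ u ++ u.map g) w

theorem containsSquareThenInvolutionImage_of_eq_succ {α : Type*} [DecidableEq α]
    (w : ℕ → α) (i : ℕ) (h : w i = w (i + 1)) : ContainsSquareThenInvolutionImage w :=
  ⟨[w i], List.cons_ne_nil _ _, Equiv.swap (w i) (w (i + 2)), Equiv.swap_apply_self _ _, i,
    by simp [List.range_succ, ← h]⟩

theorem containsSquareThenInvolutionImage_of_periodic_two {α : Type*} (w : ℕ → α)
    (hw : ∀ i, w (i + 2) = w i) : ContainsSquareThenInvolutionImage w :=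
  ⟨[w 0, w 1], List.cons_ne_nil _ _, id, fun _ => rfl, 0, by simp [List.range_succ, hw]⟩

theorem Fin.eq_of_ne_of_ne_of_two {x y z : Fin 2} (hxy : x ≠ y) (hyz : y ≠ z) : x = z := by
  omega

/-- Every infinite binary word contains the pattern `α α θ(α)` for some morphic
involution `θ` (induced by a letter involution `g`): there are a nonempty `u`
and `g` with `u ++ u ++ θ(u)` a factor of `w`.  Hence the morphic θ-avoidance
index of `α α θ(α)` exceeds `2`. -/
theorem binary_contains_aa_ta_morphic (w : ℕ → Fin 2) :
    ∃ u : List (Fin 2), u ≠ [] ∧ ∃ g : Fin 2 → Fin 2, (∀ z, g (g z) = z) ∧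
      FactorOf (u ++ u ++ u.map g) w := by
  by_cases hrep : ∃ i, w i = w (i + 1)
  · obtain ⟨i, hi⟩ := hrep
    exact containsSquareThenInvolutionImage_of_eq_succ w i hi
  · push Not at hrep
    exact containsSquareThenInvolutionImage_of_periodic_two w fun i =>
      (Fin.eq_of_ne_of_ne_of_two (hrep i) (hrep (i + 1))).symm
end

section
/- The morphic and antimorphic θ-avoidance indices of α α θ(α) are both exactly 3: there is an infinite word over a 3-letter alphabet avoiding the ordinary pattern ααβ (hence avoiding α α θ(α) for all involutions), and no binary word avoids α α θ(α) for all morphic (resp. antimorphic) involutions. -/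
open Function

section Words

variable {α : Type*}

def SquareFreeWord (w : ℕ → α) : Prop :=
  ∀ i p, 0 < p → ¬ ∀ j < p, w (i + j) = w (i + p + j)

def OverlapFreeWord (w : ℕ → α) : Prop :=
  ∀ i p, 0 < p → ¬ ∀ j ≤ p, w (i + j) = w (i + p + j)

theorem SquareFreeWord.not_factorOf_append {w : ℕ → α} (hw : SquareFreeWord w) {u : List α}
    (hu : u ≠ []) (x : List α) : ¬ FactorOf (u ++ u ++ x) w := by
  rw [factorOf_iff_getElem]
  rintro ⟨i, hi⟩
  have hlen : (u ++ u ++ x).length = u.length + u.length + x.length := by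
    simp only [List.length_append]
  refine hw i u.length (List.length_pos_iff.mpr hu) fun j hj => ?_
  have h₁ := hi j (by omega)
  have h₂ := hi (u.length + j) (by omega)
  simp only [List.append_assoc, List.getElem_append_left hj] at h₁
  simp only [List.append_assoc, List.getElem_append_right (Nat.le_add_right _ _),
    Nat.add_sub_cancel_left, List.getElem_append_left hj] at h₂
  rw [← h₁, h₂, add_assoc]

end Words

def thueMorse (n : ℕ) : Bool := Odd (Nat.digits 2 n).sum

namespace thueMorse

theorem two_mul (n : ℕ) : thueMorse (2 * n) = thueMorse n := by
  rcases n.eq_zero_or_pos with rfl | hn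
  · rfl
  · simp [thueMorse, Nat.digits_def' one_lt_two (by omega : 0 < 2 * n)]

theorem two_mul_add_one (n : ℕ) : thueMorse (2 * n + 1) = !thueMorse n := by
  have h : (2 * n + 1) / 2 = n := by omega
  simp [thueMorse, Nat.odd_add_one, add_comm 1, h, -Nat.not_odd_iff_even]

theorem two_mul_ne_two_mul_add_one (n : ℕ) : thueMorse (2 * n) ≠ thueMorse (2 * n + 1) := by
  simp [two_mul, two_mul_add_one]

theorem eq_iff_div_two_eq {a b : ℕ} (h : a % 2 = b % 2) :
    thueMorse a = thueMorse b ↔ thueMorse (a / 2) = thueMorse (b / 2) := by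
  obtain ⟨m, n, r, hr, rfl, rfl⟩ : ∃ m n r, r < 2 ∧ a = 2 * m + r ∧ b = 2 * n + r :=
    ⟨a / 2, b / 2, a % 2, by omega, by omega, by omega⟩
  rw [show (2 * m + r) / 2 = m by omega, show (2 * n + r) / 2 = n by omega]
  interval_cases r
  · simp [two_mul]
  · simp [two_mul_add_one]

theorem succ_ne_add_two_of_eq_succ {n : ℕ} (h : thueMorse n = thueMorse (n + 1)) :
    thueMorse (n + 1) ≠ thueMorse (n + 2) := by
  rcases Nat.even_or_odd' n with ⟨m, rfl | rfl⟩
  · exact absurd h (two_mul_ne_two_mul_add_one m)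
  · simpa [mul_add] using two_mul_ne_two_mul_add_one (m + 1)

/-- Five letters starting at an odd position `2k + 1` alternate only if
`t k = t (k + 1) = t (k + 2)`. -/
theorem exists_eq_succ (i : ℕ) : ∃ j < 4, thueMorse (i + j) = thueMorse (i + j + 1) := by
  obtain ⟨k, d, hd, hk⟩ : ∃ k d, d < 2 ∧ i + d = 2 * k + 1 :=
    ⟨i / 2, 1 - i % 2, by omega, by omega⟩
  by_contra! h
  have h₁ := h d (by omega)
  have h₂ := h (d + 2) (by omega)
  rw [hk, show 2 * k + 1 + 1 = 2 * (k + 1) by omega, two_mul_add_one, two_mul] at h₁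
  rw [show i + (d + 2) = 2 * (k + 1) + 1 by omega, show 2 * (k + 1) + 1 + 1 = 2 * (k + 2) by omega,
    two_mul_add_one, two_mul] at h₂
  exact succ_ne_add_two_of_eq_succ (n := k) (by simpa using h₁) (by simpa using h₂)

theorem add_ne_add_succ_of_eq_succ {n p : ℕ} (hp : Odd p) (h : thueMorse n = thueMorse (n + 1)) :
    thueMorse (n + p) ≠ thueMorse (n + p + 1) := by
  rcases Nat.even_or_odd' n with ⟨m, rfl | rfl⟩
  · exact absurd h (two_mul_ne_two_mul_add_one m)
  · obtain ⟨q, rfl⟩ := hp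
    simpa [show 2 * m + 1 + (2 * q + 1) = 2 * (m + q + 1) by omega]
      using two_mul_ne_two_mul_add_one (m + q + 1)

/-- An overlap of even period `2q` restricts, on the positions of one parity, to an overlap of
period `q`. An overlap of odd period makes its window alternate, which five letters cannot. -/
theorem overlapFreeWord : OverlapFreeWord thueMorse := by
  intro i p hp hov
  induction p using Nat.strong_induction_on generalizing i with | _ p ih =>
  rcases Nat.even_or_odd p with ⟨q, rfl⟩ | hodd
  · refine ih q (by omega) (i / 2) (by omega) fun j hj => ?_
    have h := hov (2 * j) (by omega)
    rwa [eq_iff_div_two_eq (by omega), show (i + 2 * j) / 2 = i / 2 + j by omega,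
      show (i + (q + q) + 2 * j) / 2 = i / 2 + q + j by omega] at h
  · have no_eq_succ : ∀ j < p, thueMorse (i + j) ≠ thueMorse (i + j + 1) := by
      intro j hj h
      refine add_ne_add_succ_of_eq_succ hodd h ?_
      rw [show i + j + p = i + p + j by omega, show i + p + j + 1 = i + p + (j + 1) by omega,
        ← hov j hj.le, ← hov (j + 1) hj, ← add_assoc]
      exact h
    refine no_eq_succ 0 hp ?_
    obtain rfl | hp₃ : p = 1 ∨ 3 ≤ p := by obtain ⟨q, rfl⟩ := hodd; omega
    · simpa using hov 0 zero_le_one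
    obtain ⟨j, hj, h⟩ := exists_eq_succ i
    rcases lt_or_ge j p with hjp | hjp
    · exact absurd h (no_eq_succ j hjp)
    · have h₀ : thueMorse i = thueMorse (i + p) := hov 0 (by omega)
      rwa [show j = p by omega, ← h₀, ← hov 1 (by omega)] at h

end thueMorse

def pairCode (a b : Bool) : Fin 3 := if a = b then 1 else if a then 2 else 0

theorem pairCode_eq_one_iff {a b : Bool} : pairCode a b = 1 ↔ a = b := by
  revert a b; decide

theorem eq_iff_of_pairCode_eq {a b c d : Bool} (h : pairCode a b = pairCode c d) :
    a = c ↔ b = d := by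
  revert a b c d; decide

theorem eq_of_pairCode_eq_of_ne {a b c d : Bool} (h : pairCode a b = pairCode c d) (hab : a ≠ b) :
    a = c := by
  revert a b c d; decide

def pairWord (t : ℕ → Bool) (n : ℕ) : Fin 3 := pairCode (t n) (t (n + 1))

/-- Equal codes propagate `t (i + j) = t (i + p + j)` through a square of period `p`, and at a
position where `t` changes the code forces it: this yields an overlap, unless `t` is constant
along the square, where it has a cube. -/
theorem OverlapFreeWord.squareFreeWord_pairWord {t : ℕ → Bool} (ht : OverlapFreeWord t) :
    SquareFreeWord (pairWord t) := by
  intro i p hp hsq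
  have propagate : ∀ j ≤ p, (t (i + j) = t (i + p + j) ↔ t i = t (i + p)) := by
    intro j hj
    induction j with
    | zero => rfl
    | succ j ih =>
      rw [← ih (by omega), eq_iff_of_pairCode_eq (hsq j (by omega))]
      rfl
  by_cases hconst : ∀ j < p, t (i + j) = t (i + j + 1)
  · refine ht i 1 one_pos fun j hj => ?_
    have h₁ : pairWord t (i + 1) = 1 := by
      rcases (by omega : 1 < p ∨ p = 1) with hp₁ | rfl
      · exact pairCode_eq_one_iff.2 (hconst 1 hp₁)
      · rw [show i + 1 = i + 1 + 0 from rfl, ← hsq 0 hp]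
        exact pairCode_eq_one_iff.2 (hconst 0 hp)
    interval_cases j
    · exact hconst 0 hp
    · exact pairCode_eq_one_iff.1 h₁
  · push Not at hconst
    obtain ⟨j, hj, hne⟩ := hconst
    have hj' := (propagate j hj.le).1 (eq_of_pairCode_eq_of_ne (hsq j hj) hne)
    exact ht i p hp fun k hk => (propagate k hk).2 hj'

section SmallAlphabet

variable {α : Type*} [Fintype α]

theorem eq_of_ne_of_ne_of_card_le_two (hα : Fintype.card α ≤ 2) {a b c : α} (hab : a ≠ b)
    (hbc : b ≠ c) : a = c := by
  by_contra hac
  have := Fintype.two_lt_card_iff.2 ⟨a, b, c, hab, hac, hbc⟩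
  omega

theorem exists_eq_succ_or_periodic_two (hα : Fintype.card α ≤ 2) (w : ℕ → α) :
    (∃ i, w i = w (i + 1)) ∨ ∀ n, w (n + 2) = w n := by
  by_cases h : ∃ i, w i = w (i + 1)
  · exact Or.inl h
  · push Not at h
    exact Or.inr fun n => (eq_of_ne_of_ne_of_card_le_two hα (h n) (h (n + 1))).symm

theorem exists_involutive_factorOf_sq_map [DecidableEq α]
    (hα : Fintype.card α ≤ 2) (w : ℕ → α) :
    ∃ g : α → α, Involutive g ∧ ∃ u ≠ [], FactorOf (u ++ u ++ u.map g) w := by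
  rcases exists_eq_succ_or_periodic_two hα w with ⟨i, hi⟩ | hper
  · exact ⟨Equiv.swap (w i) (w (i + 2)), Equiv.swap_apply_self _ _, [w i], by simp,
      i, by simp [List.range_succ, hi]⟩
  · exact ⟨id, fun _ => rfl, [w 0, w 1], by simp, 0, by simp [List.range_succ, hper]⟩

theorem exists_involutive_factorOf_sq_reverse_map [DecidableEq α]
    (hα : Fintype.card α ≤ 2) (w : ℕ → α) :
    ∃ g : α → α, Involutive g ∧ ∃ u ≠ [], FactorOf (u ++ u ++ (u.map g).reverse) w := by
  rcases exists_eq_succ_or_periodic_two hα w with ⟨i, hi⟩ | hper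
  · exact ⟨Equiv.swap (w i) (w (i + 2)), Equiv.swap_apply_self _ _, [w i], by simp,
      i, by simp [List.range_succ, hi]⟩
  · exact ⟨Equiv.swap (w 0) (w 1), Equiv.swap_apply_self _ _, [w 0, w 1], by simp,
      0, by simp [List.range_succ, hper]⟩

end SmallAlphabet

/-- The morphic and antimorphic θ-avoidance indices of `α α θ(α)` are both
exactly `3`: `3` is the least `k` such that some infinite word over `Fin k`
has no factor `u ++ u ++ θ(u)` (`u` nonempty) for any morphic (resp.
antimorphic) involution `θ`. -/
theorem index_aa_ta_eq_three :
    IsLeast {k : ℕ | ∃ w : ℕ → Fin k,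
      ∀ g : Fin k → Fin k, (∀ z, g (g z) = z) →
        ∀ u : List (Fin k), u ≠ [] → ¬ FactorOf (u ++ u ++ u.map g) w} 3 ∧
    IsLeast {k : ℕ | ∃ w : ℕ → Fin k,
      ∀ g : Fin k → Fin k, (∀ z, g (g z) = z) →
        ∀ u : List (Fin k), u ≠ [] →
          ¬ FactorOf (u ++ u ++ (u.map g).reverse) w} 3 := by
  have hsf : SquareFreeWord (pairWord thueMorse) :=
    thueMorse.overlapFreeWord.squareFreeWord_pairWord
  refine ⟨⟨⟨pairWord thueMorse, fun _ _ _ hu => hsf.not_factorOf_append hu _⟩, ?_⟩,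
    ⟨⟨pairWord thueMorse, fun _ _ _ hu => hsf.not_factorOf_append hu _⟩, ?_⟩⟩
  · rintro k ⟨w, hw⟩
    by_contra! hk
    obtain ⟨g, hg, u, hu, hf⟩ := exists_involutive_factorOf_sq_map
      (by rw [Fintype.card_fin]; omega) w
    exact hw g hg u hu hf
  · rintro k ⟨w, hw⟩
    by_contra! hk
    obtain ⟨g, hg, u, hu, hf⟩ := exists_involutive_factorOf_sq_reverse_map
      (by rw [Fintype.card_fin]; omega) w
    exact hw g hg u hu hf
end

section
/- In the word w over {a,b,c} obtained from the Thue–Morse word by the substitution a' ↦ aacb, b' ↦ accb, every occurrence of two consecutive equal letters is either cc followed by b or aa followed by c. Consequently, if θ is a morphic involution on {a,b,c} and θ(x)θ(x)θ(y) is a factor of w with (x,y) ∈ {(a,c),(c,b)}, then θ fixes a, b, c, i.e., θ is the identity. -/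
/-!
Whatever the sequence `t` is, `w` is a concatenation of the blocks `aacb` and `accb`. Every
window of three letters of `w` therefore lies inside two consecutive blocks, and inspecting these
shows that a doubled letter occurs only as `aac` or `ccb`. So if `θ(x)θ(x)θ(y)` is a factor with
`(x, y) ∈ {(a, c), (c, b)}`, then `θ` maps this pair into the same set of pairs. Mapping one pair
onto the other contradicts `θ ∘ θ = id`, so `θ` fixes two letters, and then also the third.
-/

open Function

-- The image of a Thue–Morse letter (`false` for `a'`, `true` for `b'`); `a, b, c` are `0, 1, 2`.
def tmBlock (b : Bool) : List (Fin 3) :=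
  if b then [0, 2, 2, 1] else [0, 0, 2, 1]

theorem length_tmBlock (b : Bool) : (tmBlock b).length = 4 := by
  cases b <;> rfl

theorem doubled_letter_in_tmBlocks : ∀ b b' : Bool, ∀ r < 4,
    let u := tmBlock b ++ tmBlock b'
    u.getD r 0 = u.getD (r + 1) 0 →
      (u.getD r 0 = 2 ∧ u.getD (r + 2) 0 = 1) ∨ (u.getD r 0 = 0 ∧ u.getD (r + 2) 0 = 2) := by
  decide

section BlockWord

variable {t : ℕ → Bool} {w : ℕ → Fin 3} (hw : ∀ n, w n = (tmBlock (t (n / 4))).getD (n % 4) 0)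
include hw

theorem apply_add_eq_getD_tmBlock_append (i k : ℕ) (hk : i % 4 + k < 8) :
    w (i + k) = (tmBlock (t (i / 4)) ++ tmBlock (t (i / 4 + 1))).getD (i % 4 + k) 0 := by
  rw [hw]
  by_cases hlt : i % 4 + k < 4
  · rw [List.getD_append _ _ _ _ (by rwa [length_tmBlock])]
    congr 3 <;> omega
  · rw [List.getD_append_right _ _ _ _ (by rw [length_tmBlock]; omega), length_tmBlock]
    congr 3 <;> omega

theorem doubled_letter_of_tmBlock_word (i : ℕ) (h : w i = w (i + 1)) :
    (w i = 2 ∧ w (i + 2) = 1) ∨ (w i = 0 ∧ w (i + 2) = 2) := by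
  have hw0 := apply_add_eq_getD_tmBlock_append hw i 0 (by omega)
  rw [add_zero, add_zero] at hw0
  rw [hw0, apply_add_eq_getD_tmBlock_append hw i 1 (by omega)] at h
  rw [hw0, apply_add_eq_getD_tmBlock_append hw i 2 (by omega)]
  exact doubled_letter_in_tmBlocks _ _ _ (Nat.mod_lt i (by norm_num)) h

end BlockWord

theorem Fin3.apply_eq_self_of_involutive {g : Fin 3 → Fin 3} (hg : Involutive g) {a b : Fin 3}
    (hab : a ≠ b) (ha : g a = a) (hb : g b = b) (z : Fin 3) : g z = z := by
  by_contra hz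
  have hza : z ≠ a := by rintro rfl; exact hz ha
  have hzb : z ≠ b := by rintro rfl; exact hz hb
  have hgza : g z ≠ a := fun h => hza (by rw [← hg z, h, ha])
  have hgzb : g z ≠ b := fun h => hzb (by rw [← hg z, h, hb])
  omega

theorem Fin3.involutive_eq_id_of_doubled_pair {g : Fin 3 → Fin 3} (hg : Involutive g)
    {x y : Fin 3} (hxy : (x, y) = (0, 2) ∨ (x, y) = (2, 1))
    (hgxy : (g x = 2 ∧ g y = 1) ∨ (g x = 0 ∧ g y = 2)) :
    g 0 = 0 ∧ g 1 = 1 ∧ g 2 = 2 := by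
  have fixes_all {a b : Fin 3} (hab : a ≠ b) (ha : g a = a) (hb : g b = b) :
      g 0 = 0 ∧ g 1 = 1 ∧ g 2 = 2 :=
    ⟨apply_eq_self_of_involutive hg hab ha hb 0, apply_eq_self_of_involutive hg hab ha hb 1,
      apply_eq_self_of_involutive hg hab ha hb 2⟩
  simp only [Prod.mk.injEq] at hxy
  rcases hxy with ⟨rfl, rfl⟩ | ⟨rfl, rfl⟩ <;> rcases hgxy with ⟨hx, hy⟩ | ⟨hx, hy⟩
  · exact absurd (hg 0) (by rw [hx, hy]; decide)
  · exact fixes_all (by decide) hx hy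
  · exact fixes_all (by decide) hx hy
  · exact absurd (hg 1) (by rw [hy, hx]; decide)

theorem double_letters_force_identity_general (t : ℕ → Bool)
    (w : ℕ → Fin 3)
    (hw : ∀ n : ℕ, w n =
      (if t (n / 4) then ([0, 2, 2, 1] : List (Fin 3))
       else ([0, 0, 2, 1] : List (Fin 3))).getD (n % 4) 0) :
    (∀ i : ℕ, w i = w (i + 1) →
      (w i = 2 ∧ w (i + 2) = 1) ∨ (w i = 0 ∧ w (i + 2) = 2)) ∧
    (∀ g : Fin 3 → Fin 3, (∀ z, g (g z) = z) →
      ∀ x y : Fin 3, ((x, y) = ((0 : Fin 3), (2 : Fin 3)) ∨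
        (x, y) = ((2 : Fin 3), (1 : Fin 3))) →
      FactorOf [g x, g x, g y] w →
      g 0 = 0 ∧ g 1 = 1 ∧ g 2 = 2) := by
  have doubled := doubled_letter_of_tmBlock_word (t := t) hw
  refine ⟨doubled, fun g hg x y hxy ⟨i, hi⟩ => ?_⟩
  simp only [List.length_cons, List.length_nil, List.range_succ, List.range_zero, List.nil_append,
    List.map_cons, List.map_nil, List.cons_append, List.cons.injEq, add_zero, and_true] at hi
  obtain ⟨hx, hx', hy⟩ := hi
  exact Fin3.involutive_eq_id_of_doubled_pair hg hxy (by rw [hx, hy]; exact doubled i (hx ▸ hx'))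

/-- Letters: `a = 0`, `b = 1`, `c = 2` in `Fin 3`.  In the word `w` obtained
from the Thue–Morse word `t` by `a' ↦ aacb`, `b' ↦ accb`, every occurrence of
two consecutive equal letters is either `cc` followed by `b` or `aa` followed
by `c`.  Consequently, for a morphic involution induced by a letter involution
`g`, if `[g x, g x, g y]` is a factor of `w` with `(x, y) ∈ {(a,c), (c,b)}`,
then `g` fixes `a`, `b`, `c`. -/
theorem double_letters_force_identity (t : ℕ → Bool)
    (h0 : t 0 = false)
    (hfix : ∀ n : ℕ, t (2 * n) = t n ∧ t (2 * n + 1) = !(t n))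
    (w : ℕ → Fin 3)
    (hw : ∀ n : ℕ, w n =
      (if t (n / 4) then ([0, 2, 2, 1] : List (Fin 3))
       else ([0, 0, 2, 1] : List (Fin 3))).getD (n % 4) 0) :
    (∀ i : ℕ, w i = w (i + 1) →
      (w i = 2 ∧ w (i + 2) = 1) ∨ (w i = 0 ∧ w (i + 2) = 2)) ∧
    (∀ g : Fin 3 → Fin 3, (∀ z, g (g z) = z) →
      ∀ x y : Fin 3, ((x, y) = ((0 : Fin 3), (2 : Fin 3)) ∨
        (x, y) = ((2 : Fin 3), (1 : Fin 3))) →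
      FactorOf [g x, g x, g y] w →
      g 0 = 0 ∧ g 1 = 1 ∧ g 2 = 2) :=
  double_letters_force_identity_general t w hw
end

section
/- If u is a word over {a,b,c} of length at least 7 that is a factor of the word w obtained from the Thue–Morse word via a' ↦ aacb, b' ↦ accb, then u contains aacb or accb as a factor. -/
/-!
Cut a long factor at the first position divisible by the block length `k`: a factor of
length at least `2k - 1` still has `k` letters left after that position, and they
form a full image block.
-/

variable {α : Type*}

theorem map_range_window_infix {u : List α} {w : ℕ → α} {i j n : ℕ}
    (hu : u = (List.range u.length).map fun l => w (i + l)) (h : j + n ≤ u.length) :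
    ((List.range n).map fun l => w (i + j + l)) <:+: u := by
  obtain ⟨r, hr⟩ := Nat.exists_eq_add_of_le h
  rw [hu, hr, List.range_add, List.range_add, List.map_append, List.map_append, List.map_map]
  have hmid : (fun l => w (i + l)) ∘ (j + ·) = fun l => w (i + j + l) := by
    funext l; simp only [Function.comp_apply, Nat.add_assoc]
  rw [hmid]
  exact List.infix_append _ _ _

theorem FactorOf.exists_block_infix {k : ℕ} (B : ℕ → List α) (d : α) (w : ℕ → α) (hk : 0 < k)
    (hB : ∀ m, (B m).length = k) (hw : ∀ n, w n = (B (n / k)).getD (n % k) d)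
    {u : List α} (hu : FactorOf u w) (hlen : 2 * k - 1 ≤ u.length) :
    ∃ m, B m <:+: u := by
  obtain ⟨i, hu⟩ := hu
  set m := (i + k - 1) / k
  have hdiv := Nat.div_add_mod (i + k - 1) k
  have hmod := Nat.mod_lt (i + k - 1) hk
  have hbounds : i ≤ k * m ∧ k * m + 1 ≤ i + k := by
    generalize (i + k - 1) % k = r at hdiv hmod
    generalize k * m = q at hdiv ⊢
    omega
  have hstart : i + (k * m - i) = k * m := by omega
  have hblock : B m = (List.range k).map fun l => w (k * m + l) := by
    refine List.ext_getElem (by simp [hB]) fun l _ hl' => ?_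
    have hl : l < k := by simpa using hl'
    rw [List.getElem_map, List.getElem_range, hw, Nat.mul_add_div hk, Nat.div_eq_of_lt hl,
      Nat.add_zero, Nat.mul_add_mod_self_left, Nat.mod_eq_of_lt hl,
      List.getD_eq_getElem _ _ (hB m ▸ hl)]
  refine ⟨m, ?_⟩
  have hwin := map_range_window_infix (j := k * m - i) (n := k) hu (by omega)
  rwa [hstart, ← hblock] at hwin

/-- Letters: `a = 0`, `b = 1`, `c = 2` in `Fin 3`. -/
theorem long_factor_contains_block_general (t : ℕ → Bool)
    (w : ℕ → Fin 3)
    (hw : ∀ n : ℕ, w n =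
      (if t (n / 4) then ([0, 2, 2, 1] : List (Fin 3))
       else ([0, 0, 2, 1] : List (Fin 3))).getD (n % 4) 0) :
    ∀ u : List (Fin 3), FactorOf u w → 7 ≤ u.length →
      ([0, 0, 2, 1] : List (Fin 3)) <:+: u ∨
      ([0, 2, 2, 1] : List (Fin 3)) <:+: u := by
  intro u hu hlen
  obtain ⟨m, hm⟩ := hu.exists_block_infix
    (fun m => if t m then [0, 2, 2, 1] else [0, 0, 2, 1]) 0 w (by norm_num)
    (fun m => by split <;> rfl) hw hlen
  cases h : t m
  · exact .inl (by simpa [h] using hm)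
  · exact .inr (by simpa [h] using hm)

/-- Letters: `a = 0`, `b = 1`, `c = 2` in `Fin 3`.  Every factor `u` of length
at least `7` of the word `w` obtained from the Thue–Morse word via
`a' ↦ aacb`, `b' ↦ accb` contains `aacb` or `accb` as a (finite) factor. -/
theorem long_factor_contains_block (t : ℕ → Bool)
    (h0 : t 0 = false)
    (hfix : ∀ n : ℕ, t (2 * n) = t n ∧ t (2 * n + 1) = !(t n))
    (w : ℕ → Fin 3)
    (hw : ∀ n : ℕ, w n =
      (if t (n / 4) then ([0, 2, 2, 1] : List (Fin 3))
       else ([0, 0, 2, 1] : List (Fin 3))).getD (n % 4) 0) :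
    ∀ u : List (Fin 3), FactorOf u w → 7 ≤ u.length →
      ([0, 0, 2, 1] : List (Fin 3)) <:+: u ∨
      ([0, 2, 2, 1] : List (Fin 3)) <:+: u :=
  long_factor_contains_block_general t w hw
end
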